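/- Let Δ be a simplicial complex on [n], 1 ≤ i < j ≤ n, Γ = Shift_{ij}(Δ), and W ⊂ [n]∖{i,j}. Set Δ_1 = Δ_{W∪{i}}, Δ_2 = Δ_{W∪{j}}, Γ_1 = Γ_{W∪{i}}, Γ_2 = Γ_{W∪{j}}. Then for all k one has dim_K(H̃_k(Δ_1;K) ⊕ H̃_k(Δ_2;K)) ≤ dim_K(H̃_k(Γ_1;K) ⊕ H̃_k(Γ_2;K)). -/

import Mathlib

/-- A simplicial complex on `[n]`, modeled as a set of finsets of `Fin n`. -/
def IsSimplicialComplex {n : ℕ} (Δ : Set (Finset (Fin n))) : Prop :=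
  (∀ j : Fin n, {j} ∈ Δ) ∧ ∀ σ ∈ Δ, ∀ τ : Finset (Fin n), τ ⊆ σ → τ ∈ Δ

/-- A collection of faces is closed under passing to subsets. -/
def DownClosed {n : ℕ} (Δ : Set (Finset (Fin n))) : Prop :=
  ∀ σ ∈ Δ, ∀ τ : Finset (Fin n), τ ⊆ σ → τ ∈ Δ

open Classical in
/-- `C_{ij}(σ)`, the basic combinatorial shifting operation on a single face. -/
noncomputable def shiftFace {n : ℕ} (Δ : Set (Finset (Fin n))) (i j : Fin n)
    (σ : Finset (Fin n)) : Finset (Fin n) :=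
  if i ∈ σ ∧ j ∉ σ ∧ insert j (σ.erase i) ∉ Δ then insert j (σ.erase i) else σ

/-- `Shift_{ij}(Δ)`. -/
noncomputable def shiftOp {n : ℕ} (Δ : Set (Finset (Fin n))) (i j : Fin n) :
    Set (Finset (Fin n)) :=
  (shiftFace Δ i j) '' Δ

/-- The induced subcomplex `Δ_W = {σ ∈ Δ : σ ⊆ W}`. -/
def restrictC {n : ℕ} (Δ : Set (Finset (Fin n))) (W : Finset (Fin n)) :
    Set (Finset (Fin n)) :=
  {σ | σ ∈ Δ ∧ σ ⊆ W}

/-- The space of simplicial `(c-1)`-chains of `Δ` with coefficients in `K`, spanned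
by the faces of `Δ` of cardinality `c` (including the empty face when `c = 0`,
which yields the *reduced* chain complex). -/
abbrev SimplicialChain (K : Type) [Field K] {n : ℕ} (Δ : Set (Finset (Fin n)))
    (c : ℕ) : Type :=
  {σ : Finset (Fin n) // σ ∈ Δ ∧ σ.card = c} → K

open Classical in
/-- The simplicial boundary map (from chains spanned by cardinality-`(c+1)` faces to
chains spanned by cardinality-`c` faces). -/
noncomputable def simplicialBoundary (K : Type) [Field K] {n : ℕ}
    (Δ : Set (Finset (Fin n))) (c : ℕ) :
    SimplicialChain K Δ (c + 1) →ₗ[K] SimplicialChain K Δ c where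
  toFun f τ := ∑ k : Fin n,
    if h : k ∉ τ.1 ∧ insert k τ.1 ∈ Δ then
      ((-1 : K) ^ ((τ.1.filter (fun l => l < k)).card)) •
        f ⟨insert k τ.1, h.2, by rw [Finset.card_insert_of_notMem h.1, τ.2.2]⟩
    else 0
  map_add' f g := by
    funext τ
    simp only [Pi.add_apply]
    rw [← Finset.sum_add_distrib]
    refine Finset.sum_congr rfl fun k _ => ?_
    split
    · simp only [Pi.add_apply, smul_add]
    · simp
  map_smul' a f := by
    funext τ
    simp only [Pi.smul_apply, RingHom.id_apply]
    rw [Finset.smul_sum]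
    refine Finset.sum_congr rfl fun k _ => ?_
    split
    · simp only [Pi.smul_apply, smul_comm a]
    · simp

/-- The space of (reduced) simplicial cycles in the chain space spanned by the
cardinality-`c` faces. -/
noncomputable def simplicialCycles (K : Type) [Field K] {n : ℕ}
    (Δ : Set (Finset (Fin n))) (c : ℕ) : Submodule K (SimplicialChain K Δ c) :=
  match c with
  | 0 => ⊤
  | (d + 1) => LinearMap.ker (simplicialBoundary K Δ d)

/-- The reduced simplicial homology `H̃_{c-1}(Δ; K)`: cycles modulo boundaries in the
chain space spanned by the cardinality-`c` faces of `Δ`. -/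
abbrev reducedHomology (K : Type) [Field K] {n : ℕ} (Δ : Set (Finset (Fin n)))
    (c : ℕ) : Type :=
  simplicialCycles K Δ c ⧸
    Submodule.comap (simplicialCycles K Δ c).subtype
      (LinearMap.range (simplicialBoundary K Δ c))

open Classical in
/-- The chain map induced by an inclusion of complexes `Δ' ⊆ Δ''` (extension by
zero of the dual-basis description; on faces it is the evident inclusion). -/
noncomputable def extendChain (K : Type) [Field K] {n : ℕ}
    {Δ' Δ'' : Set (Finset (Fin n))} (h : Δ' ⊆ Δ'') (c : ℕ) :
    SimplicialChain K Δ' c →ₗ[K] SimplicialChain K Δ'' c where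
  toFun f τ := if hτ : τ.1 ∈ Δ' then f ⟨τ.1, hτ, τ.2.2⟩ else 0
  map_add' f g := by
    funext τ
    by_cases hτ : τ.1 ∈ Δ' <;> simp [hτ]
  map_smul' a f := by
    funext τ
    by_cases hτ : τ.1 ∈ Δ' <;> simp [hτ]

theorem boundary_extendChain (K : Type) [Field K] {n : ℕ}
    {Δ' Δ'' : Set (Finset (Fin n))} (h : Δ' ⊆ Δ'') (hdc : DownClosed Δ') (c : ℕ)
    (f : SimplicialChain K Δ' (c + 1)) :
    simplicialBoundary K Δ'' c (extendChain K h (c + 1) f) =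
      extendChain K h c (simplicialBoundary K Δ' c f) := by
  funext τ
  simp only [simplicialBoundary, extendChain, LinearMap.coe_mk, AddHom.coe_mk]
  by_cases hτ : τ.1 ∈ Δ'
  · rw [dif_pos hτ]
    refine Finset.sum_congr rfl fun k _ => ?_
    by_cases hins : insert k τ.1 ∈ Δ'
    · have hins'' : insert k τ.1 ∈ Δ'' := h hins
      by_cases hk : k ∈ τ.1
      · rw [dif_neg (by tauto), dif_neg (by tauto)]
      · rw [dif_pos ⟨hk, hins''⟩, dif_pos hins, dif_pos ⟨hk, hins⟩]
    · by_cases hcond : k ∉ τ.1 ∧ insert k τ.1 ∈ Δ''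
      · rw [dif_pos hcond, dif_neg hins, smul_zero,
          dif_neg (show ¬(k ∉ τ.1 ∧ insert k τ.1 ∈ Δ') by tauto)]
      · rw [dif_neg hcond,
          dif_neg (show ¬(k ∉ τ.1 ∧ insert k τ.1 ∈ Δ') by tauto)]
  · rw [dif_neg hτ]
    refine Finset.sum_eq_zero fun k _ => ?_
    by_cases hcond : k ∉ τ.1 ∧ insert k τ.1 ∈ Δ''
    · rw [dif_pos hcond]
      have hnot : insert k τ.1 ∉ Δ' := fun hmem =>
        hτ (hdc _ hmem _ (Finset.subset_insert _ _))
      rw [dif_neg hnot, smul_zero]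
    · rw [dif_neg hcond]

theorem extend_mem_cycles (K : Type) [Field K] {n : ℕ}
    {Δ' Δ'' : Set (Finset (Fin n))} (h : Δ' ⊆ Δ'') (hdc : DownClosed Δ') (c : ℕ) :
    ∀ x ∈ simplicialCycles K Δ' c, extendChain K h c x ∈ simplicialCycles K Δ'' c := by
  intro x hx
  cases c with
  | zero => trivial
  | succ d =>
    have hx' : simplicialBoundary K Δ' d x = 0 := hx
    show simplicialBoundary K Δ'' d (extendChain K h (d + 1) x) = 0
    rw [boundary_extendChain K h hdc d x, hx', map_zero]

/-- The map `H̃_{c-1}(Δ'; K) → H̃_{c-1}(Δ''; K)` induced on reduced simplicial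
homology by an inclusion of complexes `Δ' ⊆ Δ''`. -/
noncomputable def inducedHomologyMap (K : Type) [Field K] {n : ℕ}
    {Δ' Δ'' : Set (Finset (Fin n))} (h : Δ' ⊆ Δ'') (hdc : DownClosed Δ') (c : ℕ) :
    reducedHomology K Δ' c →ₗ[K] reducedHomology K Δ'' c :=
  Submodule.mapQ _ _
    (LinearMap.restrict (extendChain K h c) (extend_mem_cycles K h hdc c))
    (by
      intro x hx
      simp only [Submodule.mem_comap, Submodule.coe_subtype, LinearMap.mem_range] at hx ⊢
      obtain ⟨u, hu⟩ := hx
      refine ⟨extendChain K h (c + 1) u, ?_⟩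
      have : (LinearMap.restrict (extendChain K h c)
          (extend_mem_cycles K h hdc c) x : SimplicialChain K Δ'' c) =
          extendChain K h c (x : SimplicialChain K Δ' c) := rfl
      rw [this, ← hu, boundary_extendChain K h hdc c u])

/-- The first map `H̃_k(Δ_W) → H̃_k(Δ_1) ⊕ H̃_k(Δ_2)`, `x ↦ (i_*(x), −j_*(x))`,
appearing in the reduced Mayer–Vietoris exact sequence (here `Δ_W = Δ_1 ∩ Δ_2`). -/
noncomputable def mayerVietorisMap (K : Type) [Field K] {n : ℕ}
    {ΔW Δ₁ Δ₂ : Set (Finset (Fin n))} (h₁ : ΔW ⊆ Δ₁) (h₂ : ΔW ⊆ Δ₂)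
    (hdc : DownClosed ΔW) (c : ℕ) :
    reducedHomology K ΔW c →ₗ[K]
      (reducedHomology K Δ₁ c) × (reducedHomology K Δ₂ c) :=
  LinearMap.prod (inducedHomologyMap K h₁ hdc c) (-(inducedHomologyMap K h₂ hdc c))


/-!
Relabel by the transposition `s = (i j)`, so that `Δ₂` and `Γ₂` become complexes on `W ∪ {i}`.
A face avoiding `j` lies in `Γ` iff it and its `s`-image lie in `Δ`; a face avoiding `i` lies in
`Γ` iff it or its `s`-image lies in `Δ`. Hence `Γ₁ = Δ₁ ∩ sΔ₂` and `sΓ₂ = Δ₁ ∪ sΔ₂`. Exactness of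
the Mayer–Vietoris sequence of `Δ₁` and `sΔ₂` at `H̃(Δ₁) ⊕ H̃(sΔ₂)` gives
`dim H̃(Δ₁) + dim H̃(sΔ₂) ≤ dim H̃(Δ₁ ∩ sΔ₂) + dim H̃(Δ₁ ∪ sΔ₂)`, and relabelling vertices (with the
sign of the induced reordering of each face) is a chain isomorphism, so `dim H̃(sX) = dim H̃(X)`.

Chains are handled through their coefficient functions on all finsets: on a down-closed complex
the boundary acts on these by one formula, `boundaryFun`, independent of the complex.
-/

section ChainCoeff

variable {K : Type} [Field K] {n : ℕ} {S : Set (Finset (Fin n))} {c : ℕ}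

open Classical in
noncomputable def chainCoeff : SimplicialChain K S c →ₗ[K] Finset (Fin n) → K where
  toFun f σ := if h : σ ∈ S ∧ σ.card = c then f ⟨σ, h⟩ else 0
  map_add' f g := by
    funext σ
    by_cases h : σ ∈ S ∧ σ.card = c <;> simp [h]
  map_smul' a f := by
    funext σ
    by_cases h : σ ∈ S ∧ σ.card = c <;> simp [h]

def chainOfCoeff : (Finset (Fin n) → K) →ₗ[K] SimplicialChain K S c where
  toFun F τ := F τ.1
  map_add' _ _ := rfl
  map_smul' _ _ := rfl

theorem chainCoeff_apply_of_mem (f : SimplicialChain K S c) {σ : Finset (Fin n)}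
    (h : σ ∈ S ∧ σ.card = c) : chainCoeff f σ = f ⟨σ, h⟩ :=
  dif_pos h

theorem chainCoeff_apply_of_notMem (f : SimplicialChain K S c) {σ : Finset (Fin n)}
    (h : ¬(σ ∈ S ∧ σ.card = c)) : chainCoeff f σ = 0 :=
  dif_neg h

theorem mem_of_chainCoeff_ne_zero {f : SimplicialChain K S c} {σ : Finset (Fin n)}
    (h : chainCoeff f σ ≠ 0) : σ ∈ S ∧ σ.card = c :=
  not_not.mp (mt (chainCoeff_apply_of_notMem f) h)

theorem chainCoeff_injective : Function.Injective (chainCoeff : SimplicialChain K S c → _) :=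
  fun f g h => funext fun τ => by
    simpa only [chainCoeff_apply_of_mem _ τ.2] using congrFun h τ.1

theorem chainCoeff_chainOfCoeff {F : Finset (Fin n) → K}
    (hF : ∀ σ, F σ ≠ 0 → σ ∈ S ∧ σ.card = c) :
    chainCoeff (chainOfCoeff F : SimplicialChain K S c) = F := by
  funext σ
  by_cases h : σ ∈ S ∧ σ.card = c
  · exact chainCoeff_apply_of_mem _ h
  · rw [chainCoeff_apply_of_notMem _ h]
    exact (not_imp_comm.mp (hF σ) h).symm

theorem chainCoeff_extendChain {S' : Set (Finset (Fin n))} (h : S ⊆ S')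
    (f : SimplicialChain K S c) : chainCoeff (extendChain K h c f) = chainCoeff f := by
  funext σ
  by_cases hσ : σ ∈ S ∧ σ.card = c
  · rw [chainCoeff_apply_of_mem _ ⟨h hσ.1, hσ.2⟩, chainCoeff_apply_of_mem _ hσ]
    exact dif_pos hσ.1
  · rw [chainCoeff_apply_of_notMem _ hσ]
    by_cases hσ' : σ ∈ S' ∧ σ.card = c
    · rw [chainCoeff_apply_of_mem _ hσ']
      exact dif_neg fun h' => hσ ⟨h', hσ'.2⟩
    · exact chainCoeff_apply_of_notMem _ hσ'

end ChainCoeff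

section BoundaryFun

def incidenceSign (K : Type) [Field K] {n : ℕ} (σ : Finset (Fin n)) (k : Fin n) : K :=
  (-1) ^ (σ.filter (· < k)).card

variable {K : Type} [Field K] {n : ℕ}

theorem incidenceSign_insert {σ : Finset (Fin n)} {k : Fin n} (hk : k ∉ σ) (l : Fin n) :
    incidenceSign K (insert k σ) l = (if k < l then -1 else 1) * incidenceSign K σ l := by
  unfold incidenceSign
  rw [Finset.filter_insert]
  split_ifs with hkl
  · rw [Finset.card_insert_of_notMem fun h => hk (Finset.mem_filter.mp h).1, pow_succ, mul_comm]
  · rw [one_mul]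

noncomputable def boundaryFun : (Finset (Fin n) → K) →ₗ[K] Finset (Fin n) → K where
  toFun F σ := ∑ k, if k ∈ σ then 0 else incidenceSign K σ k * F (insert k σ)
  map_add' F G := by
    funext σ
    simp only [Pi.add_apply, ← Finset.sum_add_distrib]
    refine Finset.sum_congr rfl fun k _ => ?_
    split_ifs <;> ring
  map_smul' a F := by
    funext σ
    simp only [Pi.smul_apply, smul_eq_mul, RingHom.id_apply, Finset.mul_sum]
    refine Finset.sum_congr rfl fun k _ => ?_
    split_ifs <;> ring

theorem boundaryFun_apply (F : Finset (Fin n) → K) (σ : Finset (Fin n)) :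
    boundaryFun F σ = ∑ k, if k ∈ σ then 0 else incidenceSign K σ k * F (insert k σ) :=
  rfl

theorem boundaryFun_boundaryFun (F : Finset (Fin n) → K) : boundaryFun (boundaryFun F) = 0 := by
  funext σ
  let T : Fin n × Fin n → K := fun p =>
    if p.1 ∈ σ ∨ p.2 ∈ insert p.1 σ then 0 else
      incidenceSign K σ p.1 * incidenceSign K (insert p.1 σ) p.2 *
        F (insert p.2 (insert p.1 σ))
  have hT_of_ne : ∀ {k l}, k ∉ σ → l ∉ σ → k ≠ l → T (k, l) =
      (if k < l then -1 else 1) * (incidenceSign K σ k * incidenceSign K σ l *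
        F (insert k (insert l σ))) := by
    intro k l hk hl hkl
    have hl' : l ∉ insert k σ := by simp [hl, Ne.symm hkl]
    simp only [T, if_neg (not_or.mpr ⟨hk, hl'⟩), incidenceSign_insert hk,
      Finset.insert_comm l k σ]
    ring
  have hT_swap : ∀ k l, T (k, l) + T (l, k) = 0 := by
    intro k l
    by_cases hdeg : k ∈ σ ∨ l ∈ σ ∨ k = l
    · simp only [T, Finset.mem_insert]
      rw [if_pos (by tauto), if_pos (by tauto), add_zero]
    push Not at hdeg
    obtain ⟨hk, hl, hkl⟩ := hdeg
    rw [hT_of_ne hk hl hkl, hT_of_ne hl hk hkl.symm, Finset.insert_comm l k σ]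
    rcases hkl.lt_or_gt with h | h
    · simp only [if_pos h, if_neg h.not_gt]; ring
    · simp only [if_pos h, if_neg h.not_gt]; ring
  have hsum : boundaryFun (boundaryFun F) σ = ∑ p : Fin n × Fin n, T p := by
    simp only [boundaryFun_apply, Fintype.sum_prod_type, Finset.mul_sum]
    refine Finset.sum_congr rfl fun k _ => ?_
    split_ifs with hk
    · simp [T, hk]
    · refine Finset.sum_congr rfl fun l _ => ?_
      simp only [T, hk, false_or]
      split_ifs <;> ring
  rw [hsum, Pi.zero_apply]
  refine Finset.sum_involution (fun p _ => p.swap) (fun p _ => hT_swap p.1 p.2)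
    (fun p _ hp => ?_) (fun _ _ => Finset.mem_univ _) (fun _ _ => rfl)
  contrapose! hp
  obtain ⟨k, l⟩ := p
  obtain rfl : l = k := congrArg Prod.fst hp
  simp [T]

theorem chainCoeff_simplicialBoundary {S : Set (Finset (Fin n))} (hS : DownClosed S) {c : ℕ}
    (f : SimplicialChain K S (c + 1)) :
    chainCoeff (simplicialBoundary K S c f) = boundaryFun (chainCoeff f) := by
  funext σ
  rw [boundaryFun_apply]
  by_cases hσ : σ ∈ S ∧ σ.card = c
  · rw [chainCoeff_apply_of_mem _ hσ]
    simp only [simplicialBoundary, LinearMap.coe_mk, AddHom.coe_mk]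
    refine Finset.sum_congr rfl fun k _ => ?_
    by_cases hk : k ∈ σ
    · simp [hk]
    by_cases hkσ : insert k σ ∈ S
    · rw [dif_pos ⟨hk, hkσ⟩, if_neg hk, chainCoeff_apply_of_mem _ ⟨hkσ, by
        rw [Finset.card_insert_of_notMem hk, hσ.2]⟩]
      rfl
    · rw [dif_neg (fun h => hkσ h.2), if_neg hk,
        chainCoeff_apply_of_notMem _ (fun h => hkσ h.1), mul_zero]
  · rw [chainCoeff_apply_of_notMem _ hσ]
    symm
    refine Finset.sum_eq_zero fun k _ => ?_
    split_ifs with hk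
    · rfl
    · rw [chainCoeff_apply_of_notMem _ fun h => hσ ⟨hS _ h.1 _ (Finset.subset_insert k σ), ?_⟩,
        mul_zero]
      simpa [Finset.card_insert_of_notMem hk] using h.2

end BoundaryFun
section HomologyMap

variable {K : Type} [Field K] {n : ℕ} {S S' : Set (Finset (Fin n))}

theorem mem_simplicialCycles_succ {d : ℕ} {x : SimplicialChain K S (d + 1)} :
    x ∈ simplicialCycles K S (d + 1) ↔ simplicialBoundary K S d x = 0 :=
  Iff.rfl

theorem reducedHomology_mk_eq_mk_iff {c : ℕ} (x y : simplicialCycles K S c) :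
    (Submodule.Quotient.mk x : reducedHomology K S c) = Submodule.Quotient.mk y ↔
      ∃ u, simplicialBoundary K S c u = (x : SimplicialChain K S c) - y := by
  rw [Submodule.Quotient.eq, Submodule.mem_comap, LinearMap.mem_range]
  rfl

theorem inducedHomologyMap_mk (h : S ⊆ S') (hS : DownClosed S) {c : ℕ}
    (x : simplicialCycles K S c) :
    inducedHomologyMap K h hS c (Submodule.Quotient.mk x) =
      Submodule.Quotient.mk ⟨extendChain K h c x, extend_mem_cycles K h hS c x x.2⟩ :=
  rfl

def IsChainMap (φ : ∀ c, SimplicialChain K S c →ₗ[K] SimplicialChain K S' c) : Prop :=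
  ∀ c f, simplicialBoundary K S' c (φ (c + 1) f) = φ c (simplicialBoundary K S c f)

variable {φ : ∀ c, SimplicialChain K S c →ₗ[K] SimplicialChain K S' c}
  {ψ : ∀ c, SimplicialChain K S' c →ₗ[K] SimplicialChain K S c}

theorem IsChainMap.map_mem_simplicialCycles (hφ : IsChainMap φ) {c : ℕ}
    {x : SimplicialChain K S c} (hx : x ∈ simplicialCycles K S c) :
    φ c x ∈ simplicialCycles K S' c := by
  cases c with
  | zero => trivial
  | succ d => rw [mem_simplicialCycles_succ, hφ, mem_simplicialCycles_succ.mp hx, map_zero]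

noncomputable def reducedHomologyMap (hφ : IsChainMap φ) (c : ℕ) :
    reducedHomology K S c →ₗ[K] reducedHomology K S' c :=
  Submodule.mapQ _ _ ((φ c).restrict fun _ => hφ.map_mem_simplicialCycles) <| by
    rintro x ⟨u, hu⟩
    exact ⟨φ (c + 1) u, by rw [hφ, hu]; rfl⟩

theorem reducedHomologyMap_comp_eq_id (hφ : IsChainMap φ) (hψ : IsChainMap ψ)
    (hψφ : ∀ c x, ψ c (φ c x) = x) (c : ℕ) :
    reducedHomologyMap hψ c ∘ₗ reducedHomologyMap hφ c = LinearMap.id := by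
  refine Submodule.linearMap_qext _ (LinearMap.ext fun x => ?_)
  exact congrArg Submodule.Quotient.mk (Subtype.ext (hψφ c x))

noncomputable def reducedHomologyCongr (hφ : IsChainMap φ) (hψ : IsChainMap ψ)
    (hψφ : ∀ c x, ψ c (φ c x) = x) (hφψ : ∀ c x, φ c (ψ c x) = x) (c : ℕ) :
    reducedHomology K S c ≃ₗ[K] reducedHomology K S' c :=
  LinearEquiv.ofLinearMap (reducedHomologyMap hφ c) (reducedHomologyMap hψ c)
    (reducedHomologyMap_comp_eq_id hψ hφ hφψ c) (reducedHomologyMap_comp_eq_id hφ hψ hψφ c)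

end HomologyMap

section InversionSign

def inversionSign (K : Type) [Field K] {n : ℕ} (e : Fin n ≃ Fin n) (σ : Finset (Fin n)) : K :=
  ∏ a ∈ σ, ∏ b ∈ σ, if a < b ∧ e b < e a then -1 else 1

variable {K : Type} [Field K] {n : ℕ}

theorem ite_neg_one_mul_self (p : Prop) [Decidable p] :
    ((if p then -1 else 1 : K)) * (if p then -1 else 1) = 1 := by
  split_ifs <;> simp

theorem incidenceSign_mul_self (σ : Finset (Fin n)) (k : Fin n) :
    incidenceSign K σ k * incidenceSign K σ k = 1 := by
  rw [incidenceSign, ← pow_add, ← two_mul, pow_mul, neg_one_sq, one_pow]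

theorem incidenceSign_eq_prod (σ : Finset (Fin n)) (k : Fin n) :
    incidenceSign K σ k = ∏ l ∈ σ, if l < k then -1 else 1 := by
  rw [Finset.prod_ite, Finset.prod_const, Finset.prod_const_one, mul_one]
  rfl

theorem inversionSign_mul_self (e : Fin n ≃ Fin n) (σ : Finset (Fin n)) :
    inversionSign K e σ * inversionSign K e σ = 1 := by
  simp only [inversionSign, ← Finset.prod_mul_distrib, ite_neg_one_mul_self,
    Finset.prod_const_one]

theorem inversionSign_symm_map (e : Fin n ≃ Fin n) (σ : Finset (Fin n)) :
    inversionSign K e.symm (σ.map e.toEmbedding) = inversionSign K e σ := by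
  simp only [inversionSign, Finset.prod_map, Equiv.coe_toEmbedding, Equiv.symm_apply_apply]
  rw [Finset.prod_comm]
  exact Finset.prod_congr rfl fun a _ => Finset.prod_congr rfl fun b _ =>
    if_congr and_comm rfl rfl

theorem inversionSign_insert (e : Fin n ≃ Fin n) {σ : Finset (Fin n)} {m : Fin n} (hm : m ∉ σ) :
    inversionSign K e (insert m σ) =
      inversionSign K e σ *
        (incidenceSign K σ m * incidenceSign K (σ.map e.toEmbedding) (e m)) := by
  have hpair : ∀ l ∈ σ,
      ((if m < l ∧ e l < e m then -1 else 1 : K)) * (if l < m ∧ e m < e l then -1 else 1) =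
        (if l < m then -1 else 1) * (if e l < e m then -1 else 1) := by
    intro l hl
    have hlm : l ≠ m := ne_of_mem_of_not_mem hl hm
    rcases hlm.lt_or_gt with h | h <;>
      rcases (e.injective.ne hlm).lt_or_gt with h' | h' <;>
      simp [h, h', h.not_gt, h'.not_gt]
  simp only [inversionSign, Finset.prod_insert hm, lt_irrefl, false_and, if_false, one_mul,
    Finset.prod_mul_distrib, incidenceSign_eq_prod, Finset.prod_map, Equiv.coe_toEmbedding]
  have hprod := Finset.prod_congr rfl hpair
  rw [Finset.prod_mul_distrib, Finset.prod_mul_distrib] at hprod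
  linear_combination (∏ a ∈ σ, ∏ b ∈ σ, if a < b ∧ e b < e a then (-1 : K) else 1) * hprod

end InversionSign

section RelabelChain

variable {K : Type} [Field K] {n : ℕ} {S S' : Set (Finset (Fin n))}

def relabel (e : Fin n ≃ Fin n) (S : Set (Finset (Fin n))) : Set (Finset (Fin n)) :=
  {σ | σ.map e.toEmbedding ∈ S}

theorem mem_relabel_symm_iff (e : Fin n ≃ Fin n) (σ : Finset (Fin n)) :
    σ ∈ S ↔ σ.map e.symm.toEmbedding ∈ relabel e S := by
  simp [relabel, Finset.map_map]

theorem DownClosed.of_mem_iff_map_mem (e : Fin n ≃ Fin n)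
    (h : ∀ σ, σ ∈ S' ↔ σ.map e.toEmbedding ∈ S) (hS : DownClosed S) : DownClosed S' :=
  fun σ hσ τ hτ => (h τ).2 (hS _ ((h σ).1 hσ) _ (Finset.map_subset_map.2 hτ))

variable (e : Fin n ≃ Fin n)

/-- `inversionSign K e σ` is the sign of the reordering of the face `σ` by `e`; it is what makes
this a chain map. -/
noncomputable def relabelChain (h : ∀ σ, σ ∈ S' ↔ σ.map e.toEmbedding ∈ S) (c : ℕ) :
    SimplicialChain K S c →ₗ[K] SimplicialChain K S' c where
  toFun f τ := inversionSign K e τ.1 *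
    f ⟨τ.1.map e.toEmbedding, (h τ.1).1 τ.2.1, by rw [Finset.card_map, τ.2.2]⟩
  map_add' f g := by
    funext τ
    simp [mul_add]
  map_smul' a f := by
    funext τ
    simp only [Pi.smul_apply, smul_eq_mul, RingHom.id_apply]
    ring

variable {e} (h : ∀ σ, σ ∈ S' ↔ σ.map e.toEmbedding ∈ S)

theorem chainCoeff_relabelChain {c : ℕ} (f : SimplicialChain K S c) (σ : Finset (Fin n)) :
    chainCoeff (relabelChain e h c f) σ =
      inversionSign K e σ * chainCoeff f (σ.map e.toEmbedding) := by
  by_cases hσ : σ ∈ S' ∧ σ.card = c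
  · rw [chainCoeff_apply_of_mem _ hσ,
      chainCoeff_apply_of_mem _ ⟨(h σ).1 hσ.1, by rw [Finset.card_map, hσ.2]⟩]
    rfl
  · rw [chainCoeff_apply_of_notMem _ hσ, chainCoeff_apply_of_notMem, mul_zero]
    rwa [Finset.card_map, ← h]

theorem isChainMap_relabelChain (hS : DownClosed S) : IsChainMap (relabelChain (K := K) e h) := by
  intro c f
  apply chainCoeff_injective
  funext σ
  rw [chainCoeff_simplicialBoundary (hS.of_mem_iff_map_mem e h), chainCoeff_relabelChain,
    chainCoeff_simplicialBoundary hS, boundaryFun_apply, boundaryFun_apply, Finset.mul_sum]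
  conv_rhs => rw [← e.sum_comp]
  refine Finset.sum_congr rfl fun k _ => ?_
  have hk : e k ∈ σ.map e.toEmbedding ↔ k ∈ σ := Finset.mem_map' e.toEmbedding
  split_ifs with h₁ h₂ h₂
  · rw [mul_zero]
  · exact absurd (hk.2 h₁) h₂
  · exact absurd (hk.1 h₂) h₁
  · rw [chainCoeff_relabelChain, Finset.map_insert, Equiv.coe_toEmbedding,
      inversionSign_insert e h₁]
    linear_combination (inversionSign K e σ * incidenceSign K (σ.map e.toEmbedding) (e k) *
      chainCoeff f (insert (e k) (σ.map e.toEmbedding))) * incidenceSign_mul_self (K := K) σ k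

theorem relabelChain_symm_relabelChain (h' : ∀ σ, σ ∈ S ↔ σ.map e.symm.toEmbedding ∈ S')
    {c : ℕ} (f : SimplicialChain K S c) :
    relabelChain e.symm h' c (relabelChain e h c f) = f := by
  apply chainCoeff_injective
  funext σ
  rw [chainCoeff_relabelChain, chainCoeff_relabelChain, ← inversionSign_symm_map e.symm,
    Equiv.symm_symm, ← mul_assoc, inversionSign_mul_self, one_mul]
  simp [Finset.map_map]

theorem finrank_reducedHomology_relabel (hS : DownClosed (relabel e S)) (c : ℕ) :
    Module.finrank K (reducedHomology K (relabel e S) c) =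
      Module.finrank K (reducedHomology K S c) := by
  have h : ∀ σ, σ ∈ relabel e S ↔ σ.map e.toEmbedding ∈ S := fun _ => Iff.rfl
  have h' : ∀ σ, σ ∈ S ↔ σ.map e.symm.toEmbedding ∈ relabel e S := mem_relabel_symm_iff e
  have hS' : DownClosed S := hS.of_mem_iff_map_mem e.symm h'
  exact (reducedHomologyCongr (isChainMap_relabelChain h' hS) (isChainMap_relabelChain h hS')
    (fun _ => relabelChain_symm_relabelChain h' h) (fun _ => relabelChain_symm_relabelChain h h')
    c).finrank_eq

end RelabelChain

section MayerVietoris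

variable {K : Type} [Field K] {n : ℕ} {A B : Set (Finset (Fin n))}

theorem DownClosed.inter (hA : DownClosed A) (hB : DownClosed B) : DownClosed (A ∩ B) :=
  fun _ hσ _ hτ => ⟨hA _ hσ.1 _ hτ, hB _ hσ.2 _ hτ⟩

theorem DownClosed.union (hA : DownClosed A) (hB : DownClosed B) : DownClosed (A ∪ B) :=
  fun _ hσ _ hτ => hσ.imp (fun h => hA _ h _ hτ) (fun h => hB _ h _ hτ)

theorem exists_chainCoeff_add_eq {c : ℕ} (w : SimplicialChain K (A ∪ B) c) :
    ∃ (wa : SimplicialChain K A c) (wb : SimplicialChain K B c),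
      chainCoeff wa + chainCoeff wb = chainCoeff w := by
  classical
  have hw := fun σ (h : chainCoeff w σ ≠ 0) => mem_of_chainCoeff_ne_zero (σ := σ) h
  refine ⟨chainOfCoeff fun σ => if σ ∈ A then chainCoeff w σ else 0,
    chainOfCoeff fun σ => if σ ∈ A then 0 else chainCoeff w σ, ?_⟩
  rw [chainCoeff_chainOfCoeff, chainCoeff_chainOfCoeff]
  · funext σ
    by_cases hσ : σ ∈ A <;> simp [hσ]
  · intro σ hσ
    by_cases hσA : σ ∈ A
    · simp [hσA] at hσ
    · rw [if_neg hσA] at hσ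
      exact ⟨(hw σ hσ).1.resolve_left hσA, (hw σ hσ).2⟩
  · intro σ hσ
    by_cases hσA : σ ∈ A
    · rw [if_pos hσA] at hσ
      exact ⟨hσA, (hw σ hσ).2⟩
    · simp [hσA] at hσ

theorem exists_inter_chainCoeff_eq {c : ℕ} {f : SimplicialChain K A c}
    {g : SimplicialChain K B c} (h : chainCoeff f = chainCoeff g) :
    ∃ y : SimplicialChain K (A ∩ B) c, chainCoeff y = chainCoeff f :=
  ⟨chainOfCoeff (chainCoeff f), chainCoeff_chainOfCoeff fun _ hσ =>
    ⟨⟨(mem_of_chainCoeff_ne_zero hσ).1, (mem_of_chainCoeff_ne_zero (h ▸ hσ)).1⟩,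
      (mem_of_chainCoeff_ne_zero hσ).2⟩⟩

theorem ker_coprod_le_range_mayerVietorisMap (hA : DownClosed A) (hB : DownClosed B) (c : ℕ) :
    LinearMap.ker ((inducedHomologyMap K Set.subset_union_left hA c).coprod
        (inducedHomologyMap K Set.subset_union_right hB c)) ≤
      LinearMap.range (mayerVietorisMap K Set.inter_subset_left Set.inter_subset_right
        (hA.inter hB) c) := by
  rintro ⟨u, v⟩ huv
  obtain ⟨a, rfl⟩ := Submodule.Quotient.mk_surjective _ u
  obtain ⟨b, rfl⟩ := Submodule.Quotient.mk_surjective _ v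
  obtain ⟨w, hw⟩ : ∃ w, simplicialBoundary K (A ∪ B) c w =
      extendChain K Set.subset_union_left c a + extendChain K Set.subset_union_right c b := by
    rwa [LinearMap.mem_ker, LinearMap.coprod_apply, inducedHomologyMap_mk, inducedHomologyMap_mk,
      ← Submodule.Quotient.mk_add, Submodule.Quotient.mk_eq_zero] at huv
  obtain ⟨wa, wb, hwab⟩ := exists_chainCoeff_add_eq w
  -- `a - ∂ wa` and `∂ wb - b` agree on `A ∪ B`, so they live on `A ∩ B`.
  have hcoeff : chainCoeff ((a : SimplicialChain K A c) - simplicialBoundary K A c wa) =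
      chainCoeff (simplicialBoundary K B c wb - (b : SimplicialChain K B c)) := by
    have := congrArg chainCoeff hw
    rw [chainCoeff_simplicialBoundary (hA.union hB), ← hwab, map_add, map_add,
      chainCoeff_extendChain, chainCoeff_extendChain] at this
    rw [map_sub, map_sub, chainCoeff_simplicialBoundary hA, chainCoeff_simplicialBoundary hB]
    linear_combination -this
  obtain ⟨y, hy⟩ := exists_inter_chainCoeff_eq hcoeff
  have hyA : extendChain K Set.inter_subset_left c y = a - simplicialBoundary K A c wa :=
    chainCoeff_injective (by rw [chainCoeff_extendChain, hy])
  have hyB : extendChain K Set.inter_subset_right c y =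
      simplicialBoundary K B c wb - (b : SimplicialChain K B c) :=
    chainCoeff_injective (by rw [chainCoeff_extendChain, hy, hcoeff])
  have hy_cycle : y ∈ simplicialCycles K (A ∩ B) c := by
    cases c with
    | zero => trivial
    | succ d =>
      refine chainCoeff_injective ?_
      rw [chainCoeff_simplicialBoundary (hA.inter hB), hy, map_sub, map_sub,
        chainCoeff_simplicialBoundary hA wa, boundaryFun_boundaryFun,
        ← chainCoeff_simplicialBoundary hA, mem_simplicialCycles_succ.mp a.2, map_zero, map_zero,
        sub_zero]
  refine ⟨Submodule.Quotient.mk ⟨y, hy_cycle⟩, Prod.ext ?_ ?_⟩ <;>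
    simp only [mayerVietorisMap, LinearMap.prod_apply, Function.prod, LinearMap.neg_apply,
      inducedHomologyMap_mk]
  · rw [reducedHomology_mk_eq_mk_iff]
    exact ⟨-wa, by simp [hyA]⟩
  · rw [← Submodule.Quotient.mk_neg, reducedHomology_mk_eq_mk_iff]
    exact ⟨-wb, by simp [hyB]⟩

theorem finrank_reducedHomology_add_le (hA : DownClosed A) (hB : DownClosed B) (c : ℕ) :
    Module.finrank K (reducedHomology K A c) + Module.finrank K (reducedHomology K B c) ≤
      Module.finrank K (reducedHomology K (A ∩ B) c) +
        Module.finrank K (reducedHomology K (A ∪ B) c) := by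
  set g := (inducedHomologyMap K Set.subset_union_left hA c).coprod
    (inducedHomologyMap K Set.subset_union_right hB c)
  calc Module.finrank K (reducedHomology K A c) + Module.finrank K (reducedHomology K B c)
      = Module.finrank K (LinearMap.ker g) + Module.finrank K (LinearMap.range g) := by
        rw [← Module.finrank_prod, ← LinearMap.finrank_range_add_finrank_ker g, add_comm]
    _ ≤ _ := add_le_add
        ((Submodule.finrank_mono (ker_coprod_le_range_mayerVietorisMap hA hB c)).trans
          (LinearMap.finrank_range_le _))
        (Submodule.finrank_le _)

end MayerVietoris

section Shifting

variable {n : ℕ} {i j : Fin n} {σ : Finset (Fin n)}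

theorem map_swap_of_notMem (hi : i ∉ σ) (hj : j ∉ σ) :
    σ.map (Equiv.swap i j).toEmbedding = σ := by
  ext a
  rw [Finset.mem_map_equiv, Equiv.symm_swap]
  rcases eq_or_ne a i with rfl | hai
  · simp [hi, hj]
  rcases eq_or_ne a j with rfl | haj
  · simp [hi, hj]
  rw [Equiv.swap_apply_of_ne_of_ne hai haj]

theorem map_swap_of_mem_of_notMem (hij : i ≠ j) (hi : i ∈ σ) (hj : j ∉ σ) :
    σ.map (Equiv.swap i j).toEmbedding = insert j (σ.erase i) := by
  ext a
  rw [Finset.mem_map_equiv, Equiv.symm_swap, Finset.mem_insert, Finset.mem_erase]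
  rcases eq_or_ne a i with rfl | hai
  · simp [hj, hij]
  rcases eq_or_ne a j with rfl | haj
  · simp [hi]
  simp [Equiv.swap_apply_of_ne_of_ne hai haj, hai, haj]

theorem map_swap_map_swap (i j : Fin n) (σ : Finset (Fin n)) :
    (σ.map (Equiv.swap i j).toEmbedding).map (Equiv.swap i j).toEmbedding = σ := by
  ext a
  simp [Finset.mem_map_equiv]

variable {Δ : Set (Finset (Fin n))}

theorem mem_shiftOp_iff_of_target_notMem (hij : i ≠ j) (hj : j ∉ σ) :
    σ ∈ shiftOp Δ i j ↔ σ ∈ Δ ∧ σ.map (Equiv.swap i j).toEmbedding ∈ Δ := by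
  constructor
  · rintro ⟨τ, hτ, rfl⟩
    unfold shiftFace at hj ⊢
    split_ifs at hj ⊢ with hmove
    · exact absurd (Finset.mem_insert_self j _) hj
    · refine ⟨hτ, ?_⟩
      by_cases hi : i ∈ τ
      · rw [map_swap_of_mem_of_notMem hij hi hj]
        by_contra hnot
        exact hmove ⟨hi, hj, hnot⟩
      · rwa [map_swap_of_notMem hi hj]
  · rintro ⟨hσ, hswap⟩
    refine ⟨σ, hσ, if_neg ?_⟩
    rintro ⟨hi, -, hnot⟩
    exact hnot (map_swap_of_mem_of_notMem hij hi hj ▸ hswap)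

theorem mem_shiftOp_iff_of_source_notMem (hij : i ≠ j) (hi : i ∉ σ) :
    σ ∈ shiftOp Δ i j ↔ σ ∈ Δ ∨ σ.map (Equiv.swap i j).toEmbedding ∈ Δ := by
  constructor
  · rintro ⟨τ, hτ, rfl⟩
    unfold shiftFace at hi ⊢
    split_ifs at hi ⊢ with hmove
    · right
      rwa [← map_swap_of_mem_of_notMem hij hmove.1 hmove.2.1, map_swap_map_swap]
    · exact Or.inl hτ
  · rintro (hσ | hswap)
    · exact ⟨σ, hσ, if_neg fun h => hi h.1⟩
    by_cases hσ : σ ∈ Δ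
    · exact ⟨σ, hσ, if_neg fun h => hi h.1⟩
    have hj : j ∈ σ := by
      by_contra hj
      rw [map_swap_of_notMem hi hj] at hswap
      exact hσ hswap
    set τ := σ.map (Equiv.swap i j).toEmbedding
    have hiτ : i ∈ τ := by simpa [τ, Finset.mem_map_equiv] using hj
    have hjτ : j ∉ τ := by simpa [τ, Finset.mem_map_equiv] using hi
    have hτσ : insert j (τ.erase i) = σ := by
      rw [← map_swap_of_mem_of_notMem hij hiτ hjτ, map_swap_map_swap]
    refine ⟨τ, hswap, ?_⟩
    rw [shiftFace, if_pos ⟨hiτ, hjτ, hτσ ▸ hσ⟩, hτσ]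

end Shifting

section Restriction

variable {n : ℕ} {Δ : Set (Finset (Fin n))} {i j : Fin n} {W : Finset (Fin n)}

theorem DownClosed.restrictC (hΔ : DownClosed Δ) (W : Finset (Fin n)) :
    DownClosed (restrictC Δ W) :=
  fun _ hσ _ hτ => ⟨hΔ _ hσ.1 _ hτ, hτ.trans hσ.2⟩

theorem map_swap_subset_insert_iff (hiW : i ∉ W) (hjW : j ∉ W) {σ : Finset (Fin n)} :
    σ.map (Equiv.swap i j).toEmbedding ⊆ insert j W ↔ σ ⊆ insert i W := by
  have hW : (insert i W).map (Equiv.swap i j).toEmbedding = insert j W := by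
    rw [Finset.map_insert, map_swap_of_notMem hiW hjW, Equiv.coe_toEmbedding,
      Equiv.swap_apply_left]
  rw [← hW, Finset.map_subset_map]

theorem restrictC_shiftOp_insert_source (hij : i ≠ j) (hiW : i ∉ W) (hjW : j ∉ W) :
    restrictC (shiftOp Δ i j) (insert i W) =
      restrictC Δ (insert i W) ∩ relabel (Equiv.swap i j) (restrictC Δ (insert j W)) := by
  ext σ
  simp only [restrictC, relabel, Set.mem_inter_iff, Set.mem_ofPred_eq,
    map_swap_subset_insert_iff hiW hjW]
  by_cases hσ : σ ⊆ insert i W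
  · have hj : j ∉ σ := fun h => by simpa [hij.symm, hjW] using hσ h
    rw [mem_shiftOp_iff_of_target_notMem hij hj]
    tauto
  · tauto

theorem relabel_restrictC_shiftOp_insert_target (hij : i ≠ j) (hiW : i ∉ W) (hjW : j ∉ W) :
    relabel (Equiv.swap i j) (restrictC (shiftOp Δ i j) (insert j W)) =
      restrictC Δ (insert i W) ∪ relabel (Equiv.swap i j) (restrictC Δ (insert j W)) := by
  ext σ
  simp only [restrictC, relabel, Set.mem_union, Set.mem_ofPred_eq,
    map_swap_subset_insert_iff hiW hjW]
  by_cases hσ : σ ⊆ insert i W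
  · have hi : i ∉ σ.map (Equiv.swap i j).toEmbedding := by
      rw [Finset.mem_map_equiv, Equiv.symm_swap, Equiv.swap_apply_left]
      exact fun h => by simpa [hij.symm, hjW] using hσ h
    rw [mem_shiftOp_iff_of_source_notMem hij hi, map_swap_map_swap]
    tauto
  · tauto

end Restriction

/-- **Inequality (10).** Let `Δ` be a simplicial complex on `[n]`, `1 ≤ i < j ≤ n`,
`Γ = Shift_{ij}(Δ)` and `W ⊆ [n]∖{i,j}`. With `Δ₁ = Δ_{W∪{i}}`, `Δ₂ = Δ_{W∪{j}}`,
`Γ₁ = Γ_{W∪{i}}`, `Γ₂ = Γ_{W∪{j}}`, for all `k` one has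
`dim_K (H̃_k(Δ₁;K) ⊕ H̃_k(Δ₂;K)) ≤ dim_K (H̃_k(Γ₁;K) ⊕ H̃_k(Γ₂;K))`. -/
theorem finrank_sum_reducedHomology_le (K : Type) [Field K] (n : ℕ)
    (Δ : Set (Finset (Fin n))) (hΔ : IsSimplicialComplex Δ)
    (i j : Fin n) (hij : i < j) (W : Finset (Fin n)) (hiW : i ∉ W) (hjW : j ∉ W)
    (c : ℕ) :
    Module.finrank K ((reducedHomology K (restrictC Δ (insert i W)) c) ×
        (reducedHomology K (restrictC Δ (insert j W)) c)) ≤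
      Module.finrank K ((reducedHomology K (restrictC (shiftOp Δ i j) (insert i W)) c) ×
        (reducedHomology K (restrictC (shiftOp Δ i j) (insert j W)) c)) := by
  have hΔ' : DownClosed Δ := hΔ.2
  have hΔ₁ : DownClosed (restrictC Δ (insert i W)) := hΔ'.restrictC _
  have hB : DownClosed (relabel (Equiv.swap i j) (restrictC Δ (insert j W))) :=
    (hΔ'.restrictC _).of_mem_iff_map_mem _ fun _ => Iff.rfl
  have hΓ₂ : DownClosed (relabel (Equiv.swap i j) (restrictC (shiftOp Δ i j) (insert j W))) := by
    rw [relabel_restrictC_shiftOp_insert_target hij.ne hiW hjW]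
    exact hΔ₁.union hB
  rw [Module.finrank_prod, Module.finrank_prod, restrictC_shiftOp_insert_source hij.ne hiW hjW,
    ← finrank_reducedHomology_relabel hΓ₂, relabel_restrictC_shiftOp_insert_target hij.ne hiW hjW,
    ← finrank_reducedHomology_relabel hB]
  exact finrank_reducedHomology_add_le hΔ₁ hB c
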